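/- Fix a positive integer n and set s = ⌊√n⌋. For d ≼₁ n define the gap G(d,n) = d − d⁻, where d⁻ is the largest floor quotient of n strictly smaller than d (with the convention d⁻ = 0 when d = 1), and define the cutting multiplicity K(d,n) = |{k ∈ ℕ⁺ : ⌊n/k⌋ = d}|. Then: (a) for every d ≼₁ n, G(⌊n/d⌋, n) = K(d,n) and K(⌊n/d⌋, n) = G(d,n); (b) for every d with 1 ≤ d ≤ s, G(d,n) = 1 and K(d,n) = ⌊n/d⌋ − ⌊n/(d+1)⌋. -/

import Mathlib

/-- `d` is a floor quotient of `n`: `d = ⌊n/k⌋` for some positive integer `k`. -/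
def FloorQuotient (d n : ℕ) : Prop := ∃ k : ℕ, 0 < k ∧ d = n / k

/-!
The `k` with `⌊n/k⌋ = d` form the interval `(⌊n/(d+1)⌋, ⌊n/d⌋]`, so
`K(d) = ⌊n/d⌋ - ⌊n/(d+1)⌋`. A floor quotient satisfies `⌊n/⌊n/d⌋⌋ = d`, and a floor quotient
`⌊n/j⌋` lies below `d` exactly when `j > ⌊n/d⌋`; hence `d⁻ = ⌊n/(⌊n/d⌋+1)⌋` and
`G(d) = d - ⌊n/(⌊n/d⌋+1)⌋`. The two formulas are exchanged by `d ↦ ⌊n/d⌋`. For `d ≤ √n`, `d` is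
always a floor quotient and `⌊n/(⌊n/d⌋+1)⌋ = d - 1`.
-/

namespace Nat

theorem pos_and_div_eq_iff_mem_Ioc {n d k : ℕ} (hd : 0 < d) :
    (0 < k ∧ n / k = d) ↔ k ∈ Finset.Ioc (n / (d + 1)) (n / d) := by
  rw [Finset.mem_Ioc, Nat.div_lt_iff_lt_mul d.succ_pos, Nat.le_div_iff_mul_le hd]
  constructor
  · rintro ⟨hk, rfl⟩
    exact ⟨by simpa [mul_comm] using Nat.lt_mul_div_succ n hk, Nat.mul_div_le n k⟩
  · rintro ⟨hlt, hle⟩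
    have hk : 0 < k := Nat.pos_of_ne_zero fun h => by simp [h] at hlt
    exact ⟨hk, Nat.div_eq_of_lt_le (by linarith) (by linarith)⟩

theorem ncard_setOf_div_eq {n d : ℕ} (hd : 0 < d) :
    {k : ℕ | 0 < k ∧ n / k = d}.ncard = n / d - n / (d + 1) := by
  have : {k : ℕ | 0 < k ∧ n / k = d} = Finset.Ioc (n / (d + 1)) (n / d) := by
    ext k
    exact pos_and_div_eq_iff_mem_Ioc hd
  rw [this, Set.ncard_coe_finset, Nat.card_Ioc]

theorem div_div_add_one_eq_sub_one {n d : ℕ} (hd : 0 < d) (h : d * d ≤ n) :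
    n / (n / d + 1) = d - 1 := by
  obtain ⟨c, rfl⟩ := Nat.exists_eq_add_one_of_ne_zero hd.ne'
  have hq : c + 1 ≤ n / (c + 1) := (Nat.le_div_iff_mul_le hd).2 h
  have hmul : n / (c + 1) * (c + 1) ≤ n := Nat.div_mul_le_self n (c + 1)
  rw [Nat.add_sub_cancel]
  refine Nat.div_eq_of_lt_le (by nlinarith) ?_
  simpa [mul_comm] using Nat.lt_mul_div_succ n hd

end Nat

namespace FloorQuotient

variable {d e n : ℕ}

theorem le (h : FloorQuotient d n) : d ≤ n := by
  obtain ⟨k, -, rfl⟩ := h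
  exact Nat.div_le_self n k

theorem div_div_self (h : FloorQuotient d n) : n / (n / d) = d := by
  obtain ⟨k, hk, rfl⟩ := h
  rcases (n / k).eq_zero_or_pos with h0 | hpos
  · simp [h0]
  have hk_le : k ≤ n / (n / k) := (Nat.le_div_iff_mul_le hpos).2 (Nat.mul_div_le n k)
  exact le_antisymm (Nat.div_le_div_left hk_le hk)
    ((Nat.le_div_iff_mul_le (hk.trans_le hk_le)).2 (Nat.mul_div_le n _))

theorem of_mul_self_le (hd : 0 < d) (h : d * d ≤ n) : FloorQuotient d n := by
  have hq : d ≤ n / d := (Nat.le_div_iff_mul_le hd).2 h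
  refine ⟨n / d, hd.trans_le hq, (Nat.div_eq_of_lt_le ?_ ?_).symm⟩
  · exact Nat.mul_div_le n d
  · nlinarith [Nat.lt_div_mul_add (a := n) hd]

theorem lt_iff_le_div_div_add_one (he : FloorQuotient e n) (hd : FloorQuotient d n) (hd0 : 0 < d) :
    e < d ↔ e ≤ n / (n / d + 1) := by
  constructor
  · obtain ⟨j, hj, rfl⟩ := he
    intro hlt
    refine Nat.div_le_div_left (Nat.succ_le_of_lt ?_) (Nat.succ_pos _)
    by_contra! hle
    exact (Nat.div_le_div_left hle hj).not_gt (hd.div_div_self ▸ hlt)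
  · intro hle
    refine lt_of_le_of_lt hle ((Nat.div_lt_iff_lt_mul (Nat.succ_pos _)).2 ?_)
    simpa [mul_comm] using Nat.lt_mul_div_succ n hd0

theorem sSup_setOf_lt (hd : FloorQuotient d n) (hd0 : 0 < d) :
    sSup {e : ℕ | 0 < e ∧ FloorQuotient e n ∧ e < d} = n / (n / d + 1) := by
  set m := n / (n / d + 1)
  have hm : FloorQuotient m n := ⟨n / d + 1, Nat.succ_pos _, rfl⟩
  have hub : m ∈ upperBounds {e : ℕ | 0 < e ∧ FloorQuotient e n ∧ e < d} :=
    fun e ⟨_, he, hlt⟩ => (he.lt_iff_le_div_div_add_one hd hd0).1 hlt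
  have hlub : IsLUB {e : ℕ | 0 < e ∧ FloorQuotient e n ∧ e < d} m := by
    refine ⟨hub, fun b hb => ?_⟩
    rcases m.eq_zero_or_pos with h0 | hpos
    · exact h0 ▸ b.zero_le
    · exact hb ⟨hpos, hm, (hm.lt_iff_le_div_div_add_one hd hd0).2 le_rfl⟩
  exact (isLUB_csSup' ⟨m, hub⟩).unique hlub

end FloorQuotient

theorem gaps_and_multiplicities_interchange_general (n : ℕ) :
    -- the gap `G(d,n) = d - d⁻`, where `d⁻` is the largest floor quotient of `n`
    -- strictly smaller than `d` (`sSup ∅ = 0` in `ℕ` gives the convention `1⁻ = 0`)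
    let G : ℕ → ℕ := fun d => d - sSup {e : ℕ | 0 < e ∧ FloorQuotient e n ∧ e < d}
    -- the cutting multiplicity `K(d,n) = #{k ∈ ℕ⁺ : ⌊n/k⌋ = d}`
    let K : ℕ → ℕ := fun d => {k : ℕ | 0 < k ∧ n / k = d}.ncard
    (∀ d : ℕ, 0 < d → FloorQuotient d n → G (n / d) = K d ∧ K (n / d) = G d) ∧
    (∀ d : ℕ, 1 ≤ d → d ≤ Nat.sqrt n →
      G d = 1 ∧ K d = n / d - n / (d + 1)) := by
  intro G K
  have gap_eq {d : ℕ} (hd : 0 < d) (h : FloorQuotient d n) : G d = d - n / (n / d + 1) := by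
    simp only [G, h.sSup_setOf_lt hd]
  have mult_eq {d : ℕ} (hd : 0 < d) : K d = n / d - n / (d + 1) := Nat.ncard_setOf_div_eq hd
  refine ⟨fun d hd h => ?_, fun d hd hs => ?_⟩
  · have hq : 0 < n / d := Nat.div_pos h.le hd
    rw [gap_eq hq ⟨d, hd, rfl⟩, mult_eq hd, mult_eq hq, gap_eq hd h, h.div_div_self]
    exact ⟨rfl, rfl⟩
  · have hdd : d * d ≤ n := Nat.le_sqrt.1 hs
    rw [gap_eq hd (.of_mul_self_le hd hdd), Nat.div_div_add_one_eq_sub_one hd hdd, mult_eq hd]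
    exact ⟨by omega, rfl⟩

theorem gaps_and_multiplicities_interchange (n : ℕ) (hn : 0 < n) :
    -- the gap `G(d,n) = d - d⁻`, where `d⁻` is the largest floor quotient of `n`
    -- strictly smaller than `d` (`sSup ∅ = 0` in `ℕ` gives the convention `1⁻ = 0`)
    let G : ℕ → ℕ := fun d => d - sSup {e : ℕ | 0 < e ∧ FloorQuotient e n ∧ e < d}
    -- the cutting multiplicity `K(d,n) = #{k ∈ ℕ⁺ : ⌊n/k⌋ = d}`
    let K : ℕ → ℕ := fun d => {k : ℕ | 0 < k ∧ n / k = d}.ncard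
    (∀ d : ℕ, 0 < d → FloorQuotient d n → G (n / d) = K d ∧ K (n / d) = G d) ∧
    (∀ d : ℕ, 1 ≤ d → d ≤ Nat.sqrt n →
      G d = 1 ∧ K d = n / d - n / (d + 1)) :=
  gaps_and_multiplicities_interchange_general n
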